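/- arXiv:math/0510162 — 6 statements merged into one kernel-verified Lean document; each statement's English description precedes it below -/
import Mathlib

section
/- Let X be a subset of the group G and let 𝓕 = {(ℕ×ℕ)\supp(x) : x ∈ X}, where supp(x) = {(i,j) ∈ ℕ×ℕ : x_{i,j} = 1}. Suppose there exists a sequence (K_j)_{j∈ℕ} of finite subsets of ℕ such that every finite intersection of members of 𝓕 (the empty intersection being ℕ×ℕ) meets S = ⋃_{j∈ℕ} K_j×{j}. Then the element g ∈ G defined by g_{i,j} = 1 if and only if i ∈ K_j is not a finite sum of elements of X; in particular X does not generate G. -/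
open Set Filter Topology

/-- The group `G ≤ {0,1}^(ℕ×ℕ)`. -/
def Gset : Set ((ℕ × ℕ) → ZMod 2) :=
  {x | ∀ j : ℕ, {i : ℕ | x (i, j) ≠ 0}.Finite}

/-- `g` is a finite sum of elements of `X`. -/
def IsFiniteSumOf (X : Set ((ℕ × ℕ) → ZMod 2)) (g : (ℕ × ℕ) → ZMod 2) : Prop :=
  ∃ l : List ((ℕ × ℕ) → ZMod 2), (∀ a ∈ l, a ∈ X) ∧ l.sum = g

/-- `X` generates the group `G`. -/
def GeneratesG (X : Set ((ℕ × ℕ) → ZMod 2)) : Prop :=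
  ∀ g ∈ Gset, IsFiniteSumOf X g

/-- The support of `x ∈ {0,1}^(ℕ×ℕ)`. -/
def supp (x : (ℕ × ℕ) → ZMod 2) : Set (ℕ × ℕ) := {p | x p = 1}

lemma list_sum_apply {ι M : Type*} [AddCommMonoid M] (l : List (ι → M)) (p : ι) :
    l.sum p = (l.map (fun a => a p)).sum := by
  induction l with
  | nil => simp
  | cons a t ih => simp [ih]

/-- If every finite intersection of the family `𝓕 = {(ℕ×ℕ) \ supp x : x ∈ X}` meets
`S = ⋃ j, K j × {j}` (with each `K j ⊆ ℕ` finite), then the element `g ∈ G` defined by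
`g (i,j) = 1 ↔ i ∈ K j` is not a finite sum of elements of `X`; in particular `X`
does not generate `G`. -/
theorem stmt_5 (X : Set ((ℕ × ℕ) → ZMod 2)) (hX : X ⊆ Gset) (K : ℕ → Finset ℕ)
    (h : ∀ 𝓐 : Finset (Set (ℕ × ℕ)), ↑𝓐 ⊆ (fun x => (supp x)ᶜ) '' X →
      ∃ p : ℕ × ℕ, p ∈ ⋂₀ (𝓐 : Set (Set (ℕ × ℕ))) ∧ p.1 ∈ K p.2) :
    (fun p : ℕ × ℕ => if p.1 ∈ K p.2 then (1 : ZMod 2) else 0) ∈ Gset ∧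
    ¬ IsFiniteSumOf X (fun p : ℕ × ℕ => if p.1 ∈ K p.2 then (1 : ZMod 2) else 0) ∧
    ¬ GeneratesG X := by
  classical
  have hg : (fun p : ℕ × ℕ => if p.1 ∈ K p.2 then (1 : ZMod 2) else 0) ∈ Gset := by
    intro j
    apply Set.Finite.subset (K j).finite_toSet
    intro i hi
    simp only [Set.mem_setOf_eq] at hi
    by_cases hc : i ∈ K j
    · exact Finset.mem_coe.mpr hc
    · simp [hc] at hi
  have hns : ¬ IsFiniteSumOf X (fun p : ℕ × ℕ => if p.1 ∈ K p.2 then (1 : ZMod 2) else 0) := by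
    rintro ⟨l, hlX, hsum⟩
    set 𝓐 : Finset (Set (ℕ × ℕ)) := (l.map (fun a => (supp a)ᶜ)).toFinset with h𝓐
    obtain ⟨p, hp1, hp2⟩ := h 𝓐 (by
      intro s hs
      simp only [h𝓐, List.coe_toFinset, List.mem_map, Set.mem_setOf_eq] at hs
      obtain ⟨a, ha, rfl⟩ := hs
      exact ⟨a, hlX a ha, rfl⟩)
    have hzero : ∀ a ∈ l, a p = 0 := by
      intro a ha
      have : p ∈ (supp a)ᶜ := hp1 _ (by
        simp only [h𝓐, List.mem_toFinset, List.mem_map]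
        exact List.mem_dedup.mpr (List.mem_map.mpr ⟨a, ha, rfl⟩))
      simp only [Set.mem_compl_iff, supp, Set.mem_setOf_eq] at this
      revert this; generalize a p = z; revert z; decide
    have hsp : l.sum p = 0 := by
      rw [list_sum_apply]
      apply List.sum_eq_zero
      intro x hx
      simp only [List.mem_map] at hx
      obtain ⟨a, ha, rfl⟩ := hx
      exact hzero a ha
    have : (fun p : ℕ × ℕ => if p.1 ∈ K p.2 then (1 : ZMod 2) else 0) p = 0 := by
      rw [← hsum]; exact hsp
    simp [hp2] at this
  refine ⟨hg, hns, fun hgen => hns (hgen _ hg)⟩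
end

section
/- Let 𝓕 ⊆ P(ℕ×ℕ) be upward closed with ℕ×{j} ⊆* F for every F ∈ 𝓕 and every j ∈ ℕ, and suppose that for every sequence (K_j)_{j∈ℕ} of finite subsets of ℕ there exists a finite subfamily 𝓐 ⊆ 𝓕 with (⋂𝓐) ∩ ⋃_{j∈ℕ}(K_j×{j}) = ∅. Then X = {χ_{(ℕ×ℕ)\F} : F ∈ 𝓕} is a subset of the group G and X generates G, i.e. every element of G is a finite sum of elements of X. -/
open Set Filter Topology

/-- The characteristic function of `A ⊆ ℕ × ℕ` with values in `ZMod 2`. -/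
noncomputable def chiZ (A : Set (ℕ × ℕ)) : (ℕ × ℕ) → ZMod 2 :=
  open Classical in fun p => if p ∈ A then 1 else 0

lemma chiZ_empty : chiZ ∅ = 0 := by
  funext p
  simp [chiZ]

lemma chiZ_diff_add_chiZ_inter (S A : Set (ℕ × ℕ)) :
    chiZ (S \ A) + chiZ (S ∩ A) = chiZ S := by
  funext p
  by_cases hS : p ∈ S <;> by_cases hA : p ∈ A <;> simp [chiZ, hS, hA]

lemma chiZ_setOf_ne_zero (g : (ℕ × ℕ) → ZMod 2) : chiZ {p | g p ≠ 0} = g := by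
  funext p
  have : g p = 0 ∨ g p = 1 := by generalize g p = a; revert a; decide
  rcases this with hp | hp <;> simp [chiZ, hp]

lemma chiZ_mem_Gset_iff (A : Set (ℕ × ℕ)) :
    chiZ A ∈ Gset ↔ ∀ j, {i | (i, j) ∈ A}.Finite := by
  simp [Gset, chiZ]

lemma isFiniteSumOf_iff_mem_closure (X : Set ((ℕ × ℕ) → ZMod 2)) (g : (ℕ × ℕ) → ZMod 2) :
    IsFiniteSumOf X g ↔ g ∈ AddSubmonoid.closure X := by
  refine ⟨fun ⟨l, hl, hsum⟩ => hsum ▸ AddSubmonoid.list_sum_mem _ fun x hx =>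
    AddSubmonoid.subset_closure (hl x hx), AddSubmonoid.exists_list_of_mem_closure⟩

/-- Peeling off the members `A` of `𝓐` one at a time writes `χ_S` as a sum of terms
`χ_(S ∩ ⋂ earlier \ A)`; the complement of each contains `A`, hence lies in `𝓕`. -/
lemma chiZ_mem_closure_of_inter_sInter_eq_empty {𝓕 : Set (Set (ℕ × ℕ))} (hup : IsUpperSet 𝓕)
    (𝓐 : Finset (Set (ℕ × ℕ))) (h𝓐 : ↑𝓐 ⊆ 𝓕) (S : Set (ℕ × ℕ))
    (hS : S ∩ ⋂₀ (𝓐 : Set (Set (ℕ × ℕ))) = ∅) :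
    chiZ S ∈ AddSubmonoid.closure ((fun F => chiZ Fᶜ) '' 𝓕) := by
  classical
  induction 𝓐 using Finset.induction_on generalizing S with
  | empty =>
    rw [Finset.coe_empty, sInter_empty, inter_univ] at hS
    rw [hS, chiZ_empty]
    exact zero_mem _
  | insert A 𝓐 _ ih =>
    rw [Finset.coe_insert, insert_subset_iff] at h𝓐
    rw [Finset.coe_insert, sInter_insert, ← inter_assoc] at hS
    have hdiff : chiZ (S \ A) ∈ (fun F => chiZ Fᶜ) '' 𝓕 :=
      ⟨(S \ A)ᶜ, hup (fun p hp => by simp [hp]) h𝓐.1, by simp only [compl_compl]⟩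
    rw [← chiZ_diff_add_chiZ_inter S A]
    exact add_mem (AddSubmonoid.subset_closure hdiff) (ih h𝓐.2 _ hS)

/-- If `𝓕` is upward closed, `ℕ×{j} ⊆* F` for all `F ∈ 𝓕` and `j`, and for every
sequence `(K j)` of finite subsets of `ℕ` some finite subfamily `𝓐 ⊆ 𝓕` satisfies
`⋂ 𝓐 ∩ ⋃ j, K j × {j} = ∅`, then `X = {χ_((ℕ×ℕ)\F) : F ∈ 𝓕}` is a subset of the
group `G` generating it. -/
theorem stmt_6 (𝓕 : Set (Set (ℕ × ℕ)))
    (hup : ∀ A ∈ 𝓕, ∀ B : Set (ℕ × ℕ), A ⊆ B → B ∈ 𝓕)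
    (hcof : ∀ F ∈ 𝓕, ∀ j : ℕ, {i : ℕ | (i, j) ∉ F}.Finite)
    (h : ∀ K : ℕ → Finset ℕ, ∃ 𝓐 : Finset (Set (ℕ × ℕ)), ↑𝓐 ⊆ 𝓕 ∧
      ⋂₀ (𝓐 : Set (Set (ℕ × ℕ))) ∩ {p : ℕ × ℕ | p.1 ∈ K p.2} = ∅) :
    (fun F => chiZ Fᶜ) '' 𝓕 ⊆ Gset ∧ GeneratesG ((fun F => chiZ Fᶜ) '' 𝓕) := by
  refine ⟨?_, fun g hg => ?_⟩
  · rintro _ ⟨F, hF, rfl⟩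
    exact (chiZ_mem_Gset_iff Fᶜ).2 (hcof F hF)
  · obtain ⟨𝓐, h𝓐, hdisj⟩ := h fun j => (hg j).toFinset
    have hsupp : {p : ℕ × ℕ | p.1 ∈ (hg p.2).toFinset} = {p | g p ≠ 0} := by
      ext p
      simp
    rw [hsupp, inter_comm] at hdisj
    rw [isFiniteSumOf_iff_mem_closure, ← chiZ_setOf_ne_zero g]
    exact chiZ_mem_closure_of_inter_sInter_eq_empty (fun A B hAB hA => hup A hA B hAB)
      𝓐 h𝓐 _ hdisj
end

section
/- Let B be a separable metrizable topological group that is not σ-compact and whose underlying topological space is homeomorphic to a G_δ-subset of a complete metric space. Then no subspace X of B having the Hurewicz property Ufin(O,Γ) generates B. -/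
open Set Filter Topology

universe u

/-- `c` is an open cover of the space `X`. -/
def IsOpenCover {X : Type u} [TopologicalSpace X] (c : Set (Set X)) : Prop :=
  (∀ U ∈ c, IsOpen U) ∧ ⋃₀ c = Set.univ

/-- The Hurewicz property `Ufin(O,Γ)`. -/
def HurewiczProp (X : Type u) [TopologicalSpace X] : Prop :=
  ∀ c : ℕ → Set (Set X), (∀ n, IsOpenCover (c n)) →
    ∃ v : ℕ → Set (Set X), (∀ n, v n ⊆ c n ∧ (v n).Finite) ∧
      ∀ x : X, ∀ᶠ n in atTop, x ∈ ⋃₀ v n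

/-!
A Hurewicz subspace `A` of a `Gδ`-set `⋂ n, T n` in a complete metric space lies in a σ-compact
subset of that `Gδ`-set: apply the Hurewicz property to the covers of `A` by balls of radius at
most `1 / (n + 1)` whose closures lie in `⋂ j ≤ n, T j`; for each `m` the points covered by the
chosen finitely many closed balls at every stage `n ≥ m` form a closed, totally bounded, hence
compact set. Transporting this back along the homeomorphism, a Hurewicz generating set `X` of `B`
lies in a σ-compact set `K`, and the subgroup generated by a σ-compact set is the union of the
σ-compact sets `(K ∪ K⁻¹) ^ n`, so `B` would be σ-compact.
-/

open Pointwise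

section SigmaCompact

variable {G : Type*} [TopologicalSpace G]

lemma IsSigmaCompact.union {s t : Set G} (hs : IsSigmaCompact s) (ht : IsSigmaCompact t) :
    IsSigmaCompact (s ∪ t) := by
  obtain ⟨K, hK, rfl⟩ := hs
  obtain ⟨L, hL, rfl⟩ := ht
  exact ⟨fun n => K n ∪ L n, fun n => (hK n).union (hL n), iUnion_union_distrib K L⟩

lemma IsSigmaCompact.inv [InvolutiveInv G] [ContinuousInv G] {s : Set G}
    (hs : IsSigmaCompact s) : IsSigmaCompact s⁻¹ := by
  simpa only [image_inv_eq_inv] using hs.image continuous_inv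

lemma IsSigmaCompact.mul [Mul G] [ContinuousMul G] {s t : Set G} (hs : IsSigmaCompact s)
    (ht : IsSigmaCompact t) : IsSigmaCompact (s * t) := by
  obtain ⟨K, hK, rfl⟩ := hs
  obtain ⟨L, hL, rfl⟩ := ht
  simp only [iUnion_mul, mul_iUnion]
  exact isSigmaCompact_iUnion _ fun j =>
    isSigmaCompact_iUnion _ fun i => ((hK i).mul (hL j)).isSigmaCompact

lemma IsSigmaCompact.pow [Monoid G] [ContinuousMul G] {s : Set G} (hs : IsSigmaCompact s)
    (n : ℕ) : IsSigmaCompact (s ^ n) := by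
  induction n with
  | zero => exact isCompact_singleton.isSigmaCompact
  | succ n ih => rw [pow_succ]; exact ih.mul hs

end SigmaCompact

lemma Subgroup.coe_closure_eq_iUnion_pow {G : Type*} [Group G] (s : Set G) :
    (Subgroup.closure s : Set G) = ⋃ n : ℕ, (s ∪ s⁻¹) ^ n := by
  refine Subset.antisymm (fun x hx => ?_) (iUnion_subset fun n => Subgroup.pow_subset ?_)
  · replace hx : x ∈ Submonoid.closure (s ∪ s⁻¹) := by
      rwa [← Subgroup.closure_toSubmonoid]
    induction hx using Submonoid.closure_induction with
    | mem x hx => exact mem_iUnion.2 ⟨1, by rwa [pow_one]⟩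
    | one => exact mem_iUnion.2 ⟨0, by rw [pow_zero]; rfl⟩
    | mul x y _ _ hx hy =>
      obtain ⟨m, hx⟩ := mem_iUnion.1 hx
      obtain ⟨n, hy⟩ := mem_iUnion.1 hy
      exact mem_iUnion.2 ⟨m + n, by rw [pow_add]; exact mul_mem_mul hx hy⟩
  · rintro x (hx | hx)
    · exact Subgroup.subset_closure hx
    · simpa using (Subgroup.closure s).inv_mem (Subgroup.subset_closure hx)

lemma IsSigmaCompact.subgroupClosure {G : Type*} [TopologicalSpace G] [Group G]
    [IsTopologicalGroup G] {s : Set G} (hs : IsSigmaCompact s) :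
    IsSigmaCompact (Subgroup.closure s : Set G) := by
  rw [Subgroup.coe_closure_eq_iUnion_pow]
  exact isSigmaCompact_iUnion _ fun n => (hs.union hs.inv).pow n

lemma HurewiczProp.of_surjective {P Q : Type u} [TopologicalSpace P] [TopologicalSpace Q]
    {f : P → Q} (hf : Continuous f) (hsurj : Function.Surjective f) (h : HurewiczProp P) :
    HurewiczProp Q := by
  intro c hc
  have hpull : ∀ n, IsOpenCover (preimage f '' c n) := fun n => by
    refine ⟨?_, ?_⟩
    · rintro _ ⟨V, hV, rfl⟩
      exact ((hc n).1 V hV).preimage hf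
    · rw [sUnion_image, ← preimage_iUnion₂, ← sUnion_eq_biUnion, (hc n).2, preimage_univ]
  obtain ⟨v, hv, hcov⟩ := h _ hpull
  refine ⟨fun n => image f '' v n, fun n => ⟨?_, (hv n).2.image _⟩, ?_⟩
  · rintro _ ⟨W, hW, rfl⟩
    obtain ⟨V, hV, rfl⟩ := (hv n).1 hW
    rwa [image_preimage_eq _ hsurj]
  · intro y
    obtain ⟨x, rfl⟩ := hsurj y
    filter_upwards [hcov x] with n ⟨W, hW, hxW⟩
    exact ⟨f '' W, mem_image_of_mem _ hW, mem_image_of_mem f hxW⟩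

lemma HurewiczProp.image {P Q : Type u} [TopologicalSpace P] [TopologicalSpace Q]
    {f : P → Q} (hf : Continuous f) {s : Set P} (h : HurewiczProp s) : HurewiczProp (f '' s) :=
  h.of_surjective ((hf.comp continuous_subtype_val).subtype_mk _) imageFactorization_surjective

section Metric

open Metric

variable {Y : Type u} [PseudoMetricSpace Y]

lemma HurewiczProp.exists_finite_eventually_mem_ball {A : Set Y} (hA : HurewiczProp A)
    (r : ℕ → Y → ℝ) (hr : ∀ n, ∀ a ∈ A, 0 < r n a) :
    ∃ F : ℕ → Set Y, (∀ n, (F n).Finite ∧ F n ⊆ A) ∧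
      ∀ a ∈ A, ∀ᶠ n in atTop, ∃ z ∈ F n, a ∈ ball z (r n z) := by
  set ballAt : ℕ → Y → Set A := fun n z => Subtype.val ⁻¹' ball z (r n z)
  have hcover : ∀ n, IsOpenCover (ballAt n '' A) := fun n => by
    refine ⟨?_, eq_univ_of_forall fun a => ?_⟩
    · rintro _ ⟨z, -, rfl⟩
      exact isOpen_ball.preimage continuous_subtype_val
    · exact ⟨ballAt n a, mem_image_of_mem _ a.2, mem_ball_self (hr n a a.2)⟩
  obtain ⟨v, hv, hcov⟩ := hA _ hcover
  have hcenters : ∀ n, ∃ F ⊆ A, F.Finite ∧ v n = ballAt n '' F := fun n =>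
    exists_subset_image_finite_and.1 ⟨v n, (hv n).1, (hv n).2, rfl⟩
  choose F hFA hF hFv using hcenters
  refine ⟨F, fun n => ⟨hF n, hFA n⟩, fun a ha => ?_⟩
  filter_upwards [hcov ⟨a, ha⟩] with n hn
  rw [hFv, sUnion_image, mem_iUnion₂] at hn
  obtain ⟨z, hz, haz⟩ := hn
  exact ⟨z, hz, haz⟩

lemma isCompact_of_frequently_subset_biUnion_closedBall [CompleteSpace Y] {s : Set Y}
    (hs : IsClosed s) {F : ℕ → Set Y} (hF : ∀ n, (F n).Finite) {ε : ℕ → ℝ}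
    (hε : Tendsto ε atTop (𝓝 0)) (h : ∃ᶠ n in atTop, s ⊆ ⋃ z ∈ F n, closedBall z (ε n)) :
    IsCompact s := by
  refine (totallyBounded_iff.2 fun δ hδ => ?_).isCompact_of_isClosed hs
  obtain ⟨n, hsub, hn⟩ := (h.and_eventually (hε.eventually (gt_mem_nhds hδ))).exists
  exact ⟨F n, hF n, hsub.trans (iUnion₂_mono fun z _ => closedBall_subset_ball hn)⟩

lemma HurewiczProp.exists_isSigmaCompact_of_subset_iInter [CompleteSpace Y] {T : ℕ → Set Y}
    (hT : ∀ n, IsOpen (T n)) {A : Set Y} (hAT : A ⊆ ⋂ n, T n) (hA : HurewiczProp A) :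
    ∃ K : Set Y, IsSigmaCompact K ∧ A ⊆ K ∧ K ⊆ ⋂ n, T n := by
  set W : ℕ → Set Y := fun n => ⋂ j ≤ n, T j
  have hAW : ∀ n, A ⊆ W n := fun n =>
    hAT.trans fun y hy => mem_iInter₂.2 fun j _ => mem_iInter.1 hy j
  have hradius : ∀ n y, ∃ ρ : ℝ, y ∈ W n →
      0 < ρ ∧ ρ ≤ 1 / (n + 1) ∧ closedBall y ρ ⊆ W n := fun n y => by
    by_cases hy : y ∈ W n
    · have hWn : IsOpen (W n) := (finite_Iic n).isOpen_biInter fun j _ => hT j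
      obtain ⟨δ, hδ, hδW⟩ := nhds_basis_closedBall.mem_iff.1 (hWn.mem_nhds hy)
      exact ⟨min δ (1 / (n + 1)), fun _ => ⟨lt_min hδ (by positivity), min_le_right _ _,
        (closedBall_subset_closedBall (min_le_left _ _)).trans hδW⟩⟩
    · exact ⟨0, fun h => absurd h hy⟩
  choose r hr using hradius
  obtain ⟨F, hF, hAF⟩ :=
    hA.exists_finite_eventually_mem_ball r fun n a ha => (hr n a (hAW n ha)).1
  have hball : ∀ n, ∀ z ∈ F n, r n z ≤ 1 / (n + 1) ∧ closedBall z (r n z) ⊆ W n :=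
    fun n z hz => (hr n z (hAW n ((hF n).2 hz))).2
  set L : ℕ → Set Y := fun m => ⋂ n ≥ m, ⋃ z ∈ F n, closedBall z (r n z)
  have hL : ∀ m, IsCompact (L m) := fun m => by
    refine isCompact_of_frequently_subset_biUnion_closedBall (ε := fun n : ℕ => 1 / (n + 1))
      (isClosed_biInter fun n _ => (hF n).1.isClosed_biUnion fun _ _ => isClosed_closedBall)
      (fun n => (hF n).1) tendsto_one_div_add_atTop_nhds_zero_nat
      (frequently_atTop.2 fun m' => ?_)
    refine ⟨max m m', le_max_right _ _, (biInter_subset_of_mem (le_max_left m m')).trans ?_⟩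
    exact iUnion₂_mono fun z hz => closedBall_subset_closedBall (hball _ z hz).1
  refine ⟨⋃ m, L m, isSigmaCompact_iUnion_of_isCompact L hL, fun a ha => ?_, ?_⟩
  · obtain ⟨m, hm⟩ := eventually_atTop.1 (hAF a ha)
    refine mem_iUnion.2 ⟨m, mem_iInter₂.2 fun n hn => ?_⟩
    obtain ⟨z, hz, haz⟩ := hm n hn
    exact mem_biUnion hz (ball_subset_closedBall haz)
  · refine iUnion_subset fun m x hx => mem_iInter.2 fun j => ?_
    obtain ⟨z, hz, hxz⟩ := mem_iUnion₂.1 (mem_iInter₂.1 hx (max m j) (le_max_left m j))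
    exact mem_iInter₂.1 ((hball _ z hz).2 hxz) j (le_max_right m j)

end Metric

theorem stmt_8_general (B : Type u) [TopologicalSpace B] [Group B] [IsTopologicalGroup B]
    (hnotsc : ¬ ∃ K : ℕ → Set B, (∀ n, IsCompact (K n)) ∧ ⋃ n, K n = Set.univ)
    (Y : Type u) [MetricSpace Y] [CompleteSpace Y]
    (T : ℕ → Set Y) (hT : ∀ n, IsOpen (T n)) (e : B ≃ₜ ↥(⋂ n, T n)) :
    ∀ X : Set B, HurewiczProp ↥X → Subgroup.closure X ≠ ⊤ := by
  intro X hX hgen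
  set f : B → Y := Subtype.val ∘ e
  have hf : IsEmbedding f := IsEmbedding.subtypeVal.comp e.isEmbedding
  have hrange : range f = ⋂ n, T n := by
    rw [e.surjective.range_comp, Subtype.range_coe]
  obtain ⟨K, hK, hXK, hKT⟩ := (hX.image hf.continuous).exists_isSigmaCompact_of_subset_iInter hT
    (hrange ▸ image_subset_range f X)
  have hpullback : IsSigmaCompact (f ⁻¹' K) := by
    rwa [hf.isSigmaCompact_iff, image_preimage_eq_of_subset (hrange ▸ hKT)]
  have hclosure : Subgroup.closure (f ⁻¹' K) = ⊤ :=
    top_le_iff.1 (hgen ▸ Subgroup.closure_mono (image_subset_iff.1 hXK))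
  have huniv : IsSigmaCompact (univ : Set B) := by
    simpa only [hclosure, Subgroup.coe_top] using hpullback.subgroupClosure
  exact hnotsc huniv

/-- A separable metrizable non-σ-compact topological group homeomorphic to a
`Gδ`-subset of a complete metric space is not generated by any of its Hurewicz
subspaces. -/
theorem stmt_8 (B : Type u) [TopologicalSpace B] [Group B] [IsTopologicalGroup B]
    [TopologicalSpace.SeparableSpace B] [TopologicalSpace.MetrizableSpace B]
    (hnotsc : ¬ ∃ K : ℕ → Set B, (∀ n, IsCompact (K n)) ∧ ⋃ n, K n = Set.univ)
    (Y : Type u) [MetricSpace Y] [CompleteSpace Y]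
    (T : ℕ → Set Y) (hT : ∀ n, IsOpen (T n)) (e : B ≃ₜ ↥(⋂ n, T n)) :
    ∀ X : Set B, HurewiczProp ↥X → Subgroup.closure X ≠ ⊤ :=
  stmt_8_general B hnotsc Y T hT e
end

section
/- Assume the Continuum Hypothesis. Let C be a nonmeager separable metrizable topological group, let B be a separable metrizable topological group, and let f : C → B be a surjective Borel group homomorphism. Then B is generated by a subspace X ⊆ B having the Menger property Ufin(O,O). -/
open Set Filter Topology

universe u

/-- The Menger property `Ufin(O,O)`. -/
def MengerProp (X : Type u) [TopologicalSpace X] : Prop :=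
  ∀ c : ℕ → Set (Set X), (∀ n, IsOpenCover (c n)) →
    ∃ v : ℕ → Set (Set X), (∀ n, v n ⊆ c n ∧ (v n).Finite) ∧
      ∀ x : X, ∃ n : ℕ, x ∈ ⋃₀ v n

/-!
A non-meagre separable group is a Baire space, so by Pettis' theorem a Borel homomorphism `f`
out of `C` is continuous, and it suffices to find a Menger generating set of `C` itself.
Under CH, list the elements `e α` of `C` and the open sets `U α` containing a countable dense
set `D`, both indexed by `ω₁`. The sets `⋂ β < α, U β` are residual, and every element of a
Baire group is a product of two elements of any residual set; writing `e α = x α * y α` with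
`x α, y α` in that intersection, the set `D ∪ {x α} ∪ {y α}` generates `C` and is concentrated
on `D`: it has only countably many points outside any open set containing `D`. Such a set is
Menger, because countably many selections cover `D` together with an open neighbourhood of it,
and countably many more cover what is left.
-/

section Menger

variable {Y : Type*} [TopologicalSpace Y]

theorem MengerProp.of_surjective {Z : Type*} [TopologicalSpace Z] (hY : MengerProp Y)
    {g : Y → Z} (hg : Continuous g) (hs : Function.Surjective g) : MengerProp Z := by
  intro c hc
  obtain ⟨v, hv, hcov⟩ := hY (fun n => preimage g '' c n) fun n =>
    ⟨by rintro _ ⟨s, hs, rfl⟩; exact ((hc n).1 s hs).preimage hg,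
      by rw [sUnion_image, ← preimage_iUnion₂, ← sUnion_eq_biUnion, (hc n).2, preimage_univ]⟩
  refine ⟨fun n => image g '' v n, fun n => ⟨?_, (hv n).2.image _⟩, fun z => ?_⟩
  · rintro _ ⟨t, ht, rfl⟩
    obtain ⟨s, hsc, rfl⟩ := (hv n).1 ht
    rwa [image_preimage_eq s hs]
  · obtain ⟨y, rfl⟩ := hs z
    obtain ⟨n, t, ht, hyt⟩ := hcov y
    exact ⟨n, g '' t, mem_image_of_mem _ ht, mem_image_of_mem g hyt⟩

theorem MengerProp.image {Z : Type*} [TopologicalSpace Z] {X : Set Y} (hX : MengerProp X)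
    {f : Y → Z} (hf : Continuous f) : MengerProp (f '' X) :=
  hX.of_surjective (hf.restrict (mapsTo_image f X)) imageFactorization_surjective

theorem exists_finite_subfamilies_cover_of_countable {X : Type*} {c : ℕ → Set (Set X)}
    (hc : ∀ n, ⋃₀ c n = univ) {s : Set X} (hs : s.Countable) :
    ∃ v : ℕ → Set (Set X), (∀ n, v n ⊆ c n ∧ (v n).Finite) ∧ s ⊆ ⋃ n, ⋃₀ v n := by
  rcases s.eq_empty_or_nonempty with rfl | hne
  · exact ⟨fun _ => ∅, fun _ => ⟨empty_subset _, finite_empty⟩, empty_subset _⟩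
  obtain ⟨r, rfl⟩ := hs.exists_eq_range hne
  choose t htc hrt using fun n => mem_sUnion.1 ((hc n).symm ▸ mem_univ (r n))
  exact ⟨fun n => {t n}, fun n => ⟨singleton_subset_iff.2 (htc n), finite_singleton _⟩,
    range_subset_iff.2 fun n => mem_iUnion.2 ⟨n, t n, rfl, hrt n⟩⟩

def IsConcentratedOn (X D : Set Y) : Prop :=
  ∀ U, IsOpen U → D ⊆ U → (X \ U).Countable

theorem IsConcentratedOn.mengerProp {X D : Set Y} (h : IsConcentratedOn X D)
    (hD : D.Countable) (hDX : D ⊆ X) : MengerProp X := by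
  intro c hc
  have hcov : ∀ n, ⋃₀ c n = univ := fun n => (hc n).2
  obtain ⟨v, hv, hDv⟩ := exists_finite_subfamilies_cover_of_countable hcov
    (hD.preimage (f := ((↑) : X → Y)) Subtype.val_injective)
  obtain ⟨U, hU, hUv⟩ := isOpen_induced_iff.1 <| isOpen_iUnion fun n =>
    isOpen_sUnion fun t ht => (hc n).1 t ((hv n).1 ht)
  have hDU : D ⊆ U := fun y hy => by
    have : (⟨y, hDX hy⟩ : X) ∈ ⋃ n, ⋃₀ v n := hDv hy
    rwa [← hUv] at this
  obtain ⟨w, hw, hXw⟩ := exists_finite_subfamilies_cover_of_countable hcov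
    ((h U hU hDU).preimage (f := ((↑) : X → Y)) Subtype.val_injective)
  refine ⟨fun n => v n ∪ w n, fun n => ⟨union_subset (hv n).1 (hw n).1, (hv n).2.union (hw n).2⟩,
    fun x => ?_⟩
  have hx : x ∈ (⋃ n, ⋃₀ v n) ∪ ⋃ n, ⋃₀ w n := by
    by_cases hxU : (x : Y) ∈ U
    · exact Or.inl (hUv ▸ hxU)
    · exact Or.inr (hXw ⟨x.2, hxU⟩)
  obtain ⟨n, hn⟩ | ⟨n, hn⟩ := hx.imp mem_iUnion.1 mem_iUnion.1
  exacts [⟨n, sUnion_mono subset_union_left hn⟩, ⟨n, sUnion_mono subset_union_right hn⟩]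

end Menger

section BaireGroup

open TopologicalSpace Pointwise

variable {G : Type*} [TopologicalSpace G] [Group G] [IsTopologicalGroup G]

theorem iUnion_preimage_mul_denseSeq_eq_univ [SeparableSpace G] {U : Set G} (hU : IsOpen U)
    (hne : U.Nonempty) : ⋃ n, (· * denseSeq G n) ⁻¹' U = univ := by
  refine eq_univ_of_forall fun x => mem_iUnion.2 ?_
  obtain ⟨u, hu⟩ := hne
  exact (denseRange_denseSeq G).exists_mem_open (hU.preimage (continuous_const_mul x))
    ⟨x⁻¹ * u, by simpa using hu⟩

theorem baireSpace_of_not_isMeagre_univ [SeparableSpace G] (hG : ¬IsMeagre (univ : Set G)) :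
    BaireSpace G where
  baire_property f hfo hfd := by
    have hres : (⋂ n, f n) ∈ residual G :=
      countable_iInter_mem.2 fun n => residual_of_dense_open (hfo n) (hfd n)
    refine dense_iff_inter_open.2 fun U hU hne => nonempty_iff_ne_empty.2 fun hdisj => hG ?_
    have hUmeagre : IsMeagre U :=
      IsMeagre.mono (fun x hxU hx => (hdisj ▸ ⟨hxU, hx⟩ : x ∈ (∅ : Set G)))
        (show (⋂ n, f n)ᶜᶜ ∈ residual G by rwa [compl_compl])
    rw [← iUnion_preimage_mul_denseSeq_eq_univ hU hne]
    exact isMeagre_iUnion fun n =>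
      hUmeagre.preimage_of_isOpenMap (continuous_mul_const _) (isOpenMap_mul_right _)

variable [BaireSpace G]

theorem BaireMeasurableSet.mul_inv_mem_nhds_one {A : Set G} (hA : BaireMeasurableSet A)
    (hAm : ¬IsMeagre A) : A * A⁻¹ ∈ 𝓝 1 := by
  obtain ⟨u, hu, hAu⟩ := hA.residualEq_isOpen
  obtain ⟨g, hg⟩ : u.Nonempty :=
    nonempty_iff_ne_empty.2 fun h => hAm (eventuallyEq_empty.1 (h ▸ hAu))
  refine mem_of_superset
    (hu.mul_right.mem_nhds ⟨g, hg, g⁻¹, Set.inv_mem_inv.2 hg, mul_inv_cancel g⟩) ?_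
  rintro _ ⟨x, hx, y, hy, rfl⟩
  -- the open set `u ∩ (x * y)⁻¹ • u ∋ y⁻¹` contains a point `z` such that `A` agrees with `u`
  -- at `z` and at `x * y * z`; then `x * y = (x * y * z) * z⁻¹ ∈ A * A⁻¹`
  have hR : ∀ᶠ z in residual G, (z ∈ A ↔ z ∈ u) ∧ (x * y * z ∈ A ↔ x * y * z ∈ u) :=
    (hAu.and (tendsto_residual_of_isOpenMap (continuous_const_mul (x * y))
      (isOpenMap_mul_left (x * y)) hAu)).mono fun z hz => ⟨Iff.of_eq hz.1, Iff.of_eq hz.2⟩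
  obtain ⟨z, ⟨hzu, hxyzu⟩, hzA, hxyzA⟩ := (dense_of_mem_residual hR).inter_open_nonempty
    (u ∩ (x * y * ·) ⁻¹' u) (hu.inter (hu.preimage (continuous_const_mul _)))
    ⟨y⁻¹, mem_inv.1 hy, by simpa using hx⟩
  exact ⟨x * y * z, hxyzA.2 hxyzu, z⁻¹, Set.inv_mem_inv.2 (hzA.2 hzu), by group⟩

theorem exists_mul_eq_of_mem_residual {R : Set G} (hR : R ∈ residual G) (g : G) :
    ∃ x ∈ R, ∃ y ∈ R, x * y = g := by
  have hR' : R ∩ (fun x => x⁻¹ * g) ⁻¹' R ∈ residual G :=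
    inter_mem hR (tendsto_residual_of_isOpenMap (by fun_prop)
      ((Homeomorph.inv G).trans (Homeomorph.mulRight g)).isOpenMap hR)
  obtain ⟨x, hx, hxg⟩ := (dense_of_mem_residual hR').nonempty
  exact ⟨x, hx, x⁻¹ * g, hxg, mul_inv_cancel_left x g⟩

theorem MonoidHom.continuous_of_measurable [MeasurableSpace G] [BorelSpace G]
    {H : Type*} [TopologicalSpace H] [Group H] [IsTopologicalGroup H] [SeparableSpace H]
    [MeasurableSpace H] [OpensMeasurableSpace H] (f : G →* H) (hf : Measurable f) :
    Continuous f := by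
  refine continuous_of_continuousAt_one f fun W hW => ?_
  rw [map_one] at hW
  obtain ⟨V, hV, -, hVinv, hVW⟩ := exists_closed_nhds_one_inv_eq_mul_subset hW
  have hV' : (interior V).Nonempty := ⟨1, mem_interior_iff_mem_nhds.2 hV⟩
  let A : ℕ → Set G := fun n => f ⁻¹' ((· * denseSeq H n) ⁻¹' interior V)
  obtain ⟨n, hn⟩ : ∃ n, ¬IsMeagre (A n) := by
    by_contra! h
    refine not_isMeagre_of_isOpen (isOpen_univ (X := G)) univ_nonempty ?_
    rw [← preimage_univ (f := f), ← iUnion_preimage_mul_denseSeq_eq_univ isOpen_interior hV',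
      preimage_iUnion]
    exact isMeagre_iUnion h
  have hA : BaireMeasurableSet (A n) :=
    (hf (isOpen_interior.preimage (continuous_mul_const _)).measurableSet).baireMeasurableSet
  refine mem_map.2 (mem_of_superset (hA.mul_inv_mem_nhds_one hn) ?_)
  rintro _ ⟨a, ha, b, hb, rfl⟩
  have hfab : f (a * b) = (f a * denseSeq H n) * (f b⁻¹ * denseSeq H n)⁻¹ := by
    simp [mul_assoc]
  rw [mem_preimage, hfab]
  exact hVW (mul_mem_mul (interior_subset ha) (hVinv ▸ Set.inv_mem_inv.2 (interior_subset hb)))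

end BaireGroup

section Luzin

open Cardinal TopologicalSpace

universe v

theorem two_power_aleph0_eq_aleph_one_of_other_univ
    (h : (2 : Cardinal.{v}) ^ ℵ₀ = ℵ₁) : (2 : Cardinal.{u}) ^ ℵ₀ = ℵ₁ := by
  rw [two_power_aleph0] at h ⊢
  rw [← lift_eq_aleph_one.{u, v}, lift_continuum, ← lift_continuum.{u, v}, h,
    lift_eq_aleph_one.2 rfl]

theorem mk_setOf_isOpen_le_two_power_aleph0 (X : Type*) [TopologicalSpace X]
    [SecondCountableTopology X] :
    #{V : Set X | IsOpen V} ≤ 2 ^ ℵ₀ := by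
  have hB := isBasis_countableBasis X
  calc #{V : Set X | IsOpen V}
      ≤ #(Set (countableBasis X)) :=
        mk_le_of_injective (f := fun V => {b | (b : Set X) ⊆ V}) fun V W h => Subtype.ext <| by
          rw [hB.open_eq_sUnion' V.2, hB.open_eq_sUnion' W.2]
          congr 1
          ext s
          exact and_congr_right fun hs => Set.ext_iff.1 h ⟨s, hs⟩
    _ = 2 ^ #(countableBasis X) := mk_set
    _ ≤ 2 ^ ℵ₀ := power_le_power_left two_ne_zero (countable_countableBasis X).le_aleph0

theorem mk_le_two_power_aleph0_of_secondCountable (X : Type*) [TopologicalSpace X]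
    [SecondCountableTopology X] [T1Space X] : #X ≤ 2 ^ ℵ₀ :=
  (mk_le_of_injective (f := fun x => (⟨{x}ᶜ, isOpen_compl_singleton⟩ : {V : Set X | IsOpen V}))
    fun _ _ h => singleton_injective (compl_injective (congrArg Subtype.val h))).trans
    (mk_setOf_isOpen_le_two_power_aleph0 X)

theorem exists_range_eq_of_mk_le {ι β : Type u} {S : Set β} (hS : S.Nonempty) (h : #S ≤ #ι) :
    ∃ U : ι → β, range U = S := by
  obtain ⟨j⟩ := h
  have := hS.to_subtype
  exact ⟨(↑) ∘ Function.invFun j, by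
    rw [(Function.invFun_surjective j.injective).range_comp, Subtype.range_coe]⟩

theorem exists_isConcentratedOn_closure_eq_top {G : Type*} [TopologicalSpace G] [Group G]
    [IsTopologicalGroup G] [BaireSpace G] {ι : Type*} [LinearOrder ι]
    (hι : ∀ α : ι, (Iio α).Countable) {D : Set G} (hD : Dense D) {e : ι → G}
    (he : Function.Surjective e) {U : ι → Set G} (hU : range U = {V | IsOpen V ∧ D ⊆ V}) :
    ∃ X, D ⊆ X ∧ IsConcentratedOn X D ∧ Subgroup.closure X = ⊤ := by
  have hUα : ∀ α, IsOpen (U α) ∧ D ⊆ U α := fun α => (Set.ext_iff.1 hU (U α)).1 (mem_range_self α)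
  have hW : ∀ α, (⋂ β ∈ Iio α, U β) ∈ residual G := fun α =>
    (countable_bInter_mem (hι α)).2 fun β _ =>
      residual_of_dense_open (hUα β).1 (hD.mono (hUα β).2)
  choose x hx y hy hxy using fun α => exists_mul_eq_of_mem_residual (hW α) (e α)
  refine ⟨D ∪ range x ∪ range y, subset_union_left.trans subset_union_left, ?_, ?_⟩
  · rintro V hV hDV
    obtain ⟨γ, rfl⟩ : V ∈ range U := hU ▸ ⟨hV, hDV⟩
    have hIic : (Iic γ).Countable := Iio_insert (a := γ) ▸ (hι γ).insert γ
    refine ((hIic.image x).union (hIic.image y)).mono ?_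
    rintro _ ⟨(hzD | ⟨α, rfl⟩) | ⟨α, rfl⟩, hz⟩
    · exact absurd ((hUα γ).2 hzD) hz
    · exact Or.inl ⟨α, not_lt.1 fun hγα => hz (mem_iInter₂.1 (hx α) γ hγα), rfl⟩
    · exact Or.inr ⟨α, not_lt.1 fun hγα => hz (mem_iInter₂.1 (hy α) γ hγα), rfl⟩
  · refine eq_top_iff.2 fun g _ => ?_
    obtain ⟨α, rfl⟩ := he g
    rw [← hxy α]
    exact mul_mem (Subgroup.subset_closure (Or.inl (Or.inr ⟨α, rfl⟩)))
      (Subgroup.subset_closure (Or.inr ⟨α, rfl⟩))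

theorem exists_mengerProp_closure_eq_top {G : Type u} [TopologicalSpace G] [Group G]
    [IsTopologicalGroup G] [BaireSpace G] [SecondCountableTopology G] [T1Space G]
    (hCH : (2 : Cardinal.{u}) ^ ℵ₀ = ℵ₁) :
    ∃ X : Set G, MengerProp X ∧ Subgroup.closure X = ⊤ := by
  let ι := (ℵ₁ : Cardinal.{u}).ord.ToType
  have hι : ∀ α : ι, (Iio α).Countable := fun α => by
    have := mk_Iio_lt α (by rw [mk_ord_toType, Ordinal.type_toType])
    rw [mk_ord_toType] at this
    exact le_aleph0_iff_set_countable.1 (lt_aleph_one_iff.1 this)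
  have hmkι : #ι = 2 ^ ℵ₀ := by rw [mk_ord_toType, hCH]
  obtain ⟨e, he⟩ := exists_range_eq_of_mk_le (ι := ι) (S := (univ : Set G)) univ_nonempty
    (by rw [mk_univ, hmkι]; exact mk_le_two_power_aleph0_of_secondCountable G)
  let D := range (denseSeq G)
  obtain ⟨U, hU⟩ := exists_range_eq_of_mk_le (ι := ι)
    (S := {V : Set G | IsOpen V ∧ D ⊆ V}) ⟨univ, isOpen_univ, subset_univ D⟩
    (hmkι ▸ (mk_le_mk_of_subset fun _ hV => hV.1).trans (mk_setOf_isOpen_le_two_power_aleph0 G))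
  obtain ⟨X, hDX, hXD, hX⟩ := exists_isConcentratedOn_closure_eq_top hι
    (denseRange_denseSeq G) (range_eq_univ.1 he) hU
  exact ⟨X, hXD.mengerProp (countable_range _) hDX, hX⟩

end Luzin

theorem stmt_10_general (hCH : (2 : Cardinal) ^ Cardinal.aleph0 = Cardinal.aleph 1)
    (C : Type u) [TopologicalSpace C] [Group C] [IsTopologicalGroup C]
    [TopologicalSpace.SeparableSpace C] [TopologicalSpace.MetrizableSpace C]
    (hC : ¬ IsMeagre (Set.univ : Set C))
    (B : Type u) [TopologicalSpace B] [Group B] [IsTopologicalGroup B]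
    [TopologicalSpace.SeparableSpace B]
    (f : C →* B) (hsurj : Function.Surjective f)
    (hBorel : @Measurable C B (borel C) (borel B) f) :
    ∃ X : Set B, MengerProp ↥X ∧ Subgroup.closure X = ⊤ := by
  have : BaireSpace C := baireSpace_of_not_isMeagre_univ hC
  have hf : Continuous f := by
    borelize C B
    exact f.continuous_of_measurable hBorel
  let := TopologicalSpace.metrizableSpaceMetric C
  obtain ⟨X, hX, hXC⟩ := exists_mengerProp_closure_eq_top (G := C)
    (two_power_aleph0_eq_aleph_one_of_other_univ hCH)
  refine ⟨f '' X, hX.image hf, ?_⟩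
  rw [← MonoidHom.map_closure, hXC, ← MonoidHom.range_eq_map, MonoidHom.range_eq_top.2 hsurj]

/-- Under CH, a separable metrizable group which is a surjective Borel homomorphic
image of a nonmeager separable metrizable group is generated by a subspace with
the Menger property. -/
theorem stmt_10 (hCH : (2 : Cardinal) ^ Cardinal.aleph0 = Cardinal.aleph 1)
    (C : Type u) [TopologicalSpace C] [Group C] [IsTopologicalGroup C]
    [TopologicalSpace.SeparableSpace C] [TopologicalSpace.MetrizableSpace C]
    (hC : ¬ IsMeagre (Set.univ : Set C))
    (B : Type u) [TopologicalSpace B] [Group B] [IsTopologicalGroup B]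
    [TopologicalSpace.SeparableSpace B] [TopologicalSpace.MetrizableSpace B]
    (f : C →* B) (hsurj : Function.Surjective f)
    (hBorel : @Measurable C B (borel C) (borel B) f) :
    ∃ X : Set B, MengerProp ↥X ∧ Subgroup.closure X = ⊤ :=
  stmt_10_general hCH C hC B f hsurj hBorel
end

section
/- The space G = {x ∈ {0,1}^{ℕ×ℕ} : for every j ∈ ℕ, x_{i,j} = 0 for all but finitely many i ∈ ℕ}, with the subspace topology inherited from the product topology on {0,1}^{ℕ×ℕ} ({0,1} discrete), is homeomorphic to ℚ^ℕ, the countable power of the rationals with the product topology. -/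
/-!
Each column of a point of `Gset` is a finitely supported binary sequence, so `Gset` is homeomorphic
to `Sᴺ`, where `S` is the space of such sequences with the topology of the Cantor cube. Order `S`
lexicographically, with `0 < 1` at even positions and `1 < 0` at odd ones. The alternation makes
this a countable dense linear order without endpoints, and since cylinders and open intervals are
nested in each other its order topology is the subspace topology. By Cantor's back-and-forth
theorem `S` is order-isomorphic, hence homeomorphic, to `ℚ`.
-/

open Set Filter Topology

open Function PiNat

def Homeomorph.subtypeColumns {ι κ X : Type*} [TopologicalSpace X] (p : Set (ι → X)) :
    {x : ι × κ → X // ∀ j, (fun i => x (i, j)) ∈ p} ≃ₜ (κ → p) where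
  toFun x j := ⟨fun i => x.1 (i, j), x.2 j⟩
  invFun y := ⟨fun ij => (y ij.2).1 ij.1, fun j => (y j).2⟩
  left_inv _ := rfl
  right_inv _ := rfl
  continuous_toFun := continuous_pi fun j => by
    apply Continuous.subtype_mk
    exact continuous_pi fun i => (continuous_apply (i, j)).comp continuous_subtype_val
  continuous_invFun := by
    apply Continuous.subtype_mk
    exact continuous_pi fun ij =>
      (continuous_apply ij.1).comp (continuous_subtype_val.comp (continuous_apply ij.2))

theorem ZMod.eq_of_ne_of_ne_two : ∀ {a b c : ZMod 2}, a ≠ b → a ≠ c → b = c := by decide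

namespace AltLex

-- `(n : ZMod 2)` is the smaller digit at position `n`.
def AltLTAt (n : ℕ) (x y : ℕ → ZMod 2) : Prop :=
  x ∈ cylinder y n ∧ x n ≠ y n ∧ x n = n

def AltLT (x y : ℕ → ZMod 2) : Prop := ∃ n, AltLTAt n x y

theorem AltLTAt.trans {m n : ℕ} {x y z : ℕ → ZMod 2} (hxy : AltLTAt m x y) (hyz : AltLTAt n y z) :
    AltLTAt (min m n) x z := by
  obtain ⟨hxy, hxy_ne, hx⟩ := hxy
  obtain ⟨hyz, hyz_ne, hy⟩ := hyz
  rcases lt_trichotomy m n with hmn | rfl | hnm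
  · rw [min_eq_left hmn.le]
    exact ⟨fun k hk => (hxy k hk).trans (hyz k (hk.trans hmn)), hyz m hmn ▸ hxy_ne, hx⟩
  · exact absurd (hx.trans hy.symm) hxy_ne
  · rw [min_eq_right hnm.le]
    exact ⟨fun k hk => (hxy k (hk.trans hnm)).trans (hyz k hk), (hxy n hnm).symm ▸ hyz_ne,
      (hxy n hnm).trans hy⟩

theorem not_altLTAt_self (n : ℕ) (x : ℕ → ZMod 2) : ¬ AltLTAt n x x :=
  fun h => h.2.1 rfl

theorem altLTAt_or_altLTAt_of_ne {x y : ℕ → ZMod 2} (h : x ≠ y) :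
    AltLTAt (firstDiff x y) x y ∨ AltLTAt (firstDiff x y) y x := by
  have hne := apply_firstDiff_ne h
  by_cases hx : x (firstDiff x y) = firstDiff x y
  · exact .inl ⟨mem_cylinder_firstDiff x y, hne, hx⟩
  · refine .inr ⟨?_, hne.symm, ZMod.eq_of_ne_of_ne_two hne hx⟩
    rw [firstDiff_comm]
    exact mem_cylinder_firstDiff y x

theorem AltLTAt.of_mem_cylinder {n : ℕ} {x y x' y' : ℕ → ZMod 2} (h : AltLTAt n x y)
    (hx : x' ∈ cylinder x (n + 1)) (hy : y' ∈ cylinder y (n + 1)) : AltLTAt n x' y' := by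
  obtain ⟨hxy, hne, hlow⟩ := h
  have hx_n := hx n n.lt_succ_self
  have hy_n := hy n n.lt_succ_self
  refine ⟨fun k hk => ?_, hx_n ▸ hy_n ▸ hne, hx_n ▸ hlow⟩
  rw [hx k (hk.trans n.lt_succ_self), hy k (hk.trans n.lt_succ_self)]
  exact hxy k hk

theorem altLTAt_update {m : ℕ} {x : ℕ → ZMod 2} (hx : x m = m) :
    AltLTAt m x (update x m (m + 1)) := by
  refine ⟨(mem_cylinder_comm _ _ _).1 (update_mem_cylinder x m _), ?_, hx⟩
  rw [update_self, hx]
  exact (add_ne_left.2 one_ne_zero).symm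

theorem update_altLTAt {m : ℕ} {x : ℕ → ZMod 2} (hx : x m ≠ m) : AltLTAt m (update x m m) x := by
  refine ⟨update_mem_cylinder x m _, ?_, update_self m _ x⟩
  rw [update_self]
  exact Ne.symm hx

theorem exists_lt_altLTAt_of_notMem_cylinder {n : ℕ} {x y : ℕ → ZMod 2} (h : y ∉ cylinder x n) :
    ∃ k < n, AltLTAt k y x ∨ AltLTAt k x y := by
  have hne : y ≠ x := fun e => h (e ▸ self_mem_cylinder x n)
  exact ⟨firstDiff y x, not_le.1 fun hn => h ((mem_cylinder_iff_le_firstDiff hne n).2 hn),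
    (altLTAt_or_altLTAt_of_ne hne).imp id id⟩

def finSuppSeqs : Set (ℕ → ZMod 2) := {x | x.support.Finite}

theorem update_mem_finSuppSeqs {x : ℕ → ZMod 2} (hx : x ∈ finSuppSeqs) (m : ℕ) (a : ZMod 2) :
    update x m a ∈ finSuppSeqs :=
  (hx.insert m).subset fun i hi => by
    rcases eq_or_ne i m with rfl | h
    · exact mem_insert i _
    · exact mem_insert_of_mem m (by rwa [mem_support, update_of_ne h] at hi)

theorem exists_forall_ge_apply_eq_zero {x : ℕ → ZMod 2} (hx : x ∈ finSuppSeqs) :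
    ∃ N, ∀ i ≥ N, x i = 0 := by
  have : ∀ᶠ i in cofinite, x i = 0 := eventually_cofinite.2 hx
  rwa [Nat.cofinite_eq_atTop, eventually_atTop] at this

theorem exists_ge_apply_eq_natCast {x : ℕ → ZMod 2} (hx : x ∈ finSuppSeqs) (n : ℕ) :
    ∃ m ≥ n, x m = m := by
  obtain ⟨N, hN⟩ := exists_forall_ge_apply_eq_zero hx
  exact ⟨2 * (N + n), by omega, by rw [hN _ (by omega), (even_two_mul _).natCast_zmod_two]⟩

theorem exists_ge_apply_ne_natCast {x : ℕ → ZMod 2} (hx : x ∈ finSuppSeqs) (n : ℕ) :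
    ∃ m ≥ n, x m ≠ m := by
  obtain ⟨N, hN⟩ := exists_forall_ge_apply_eq_zero hx
  refine ⟨2 * (N + n) + 1, by omega, ?_⟩
  rw [hN _ (by omega), (odd_two_mul_add_one _).natCast_zmod_two]
  exact zero_ne_one

instance : IsStrictTotalOrder finSuppSeqs fun x y => AltLT x.1 y.1 where
  irrefl x := fun ⟨n, h⟩ => not_altLTAt_self n x.1 h
  trans _ _ _ := fun ⟨_, hxy⟩ ⟨_, hyz⟩ => ⟨_, hxy.trans hyz⟩
  trichotomous x y hxy hyx := by
    by_contra hne
    rcases altLTAt_or_altLTAt_of_ne (Subtype.coe_ne_coe.2 hne) with h | h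
    exacts [hxy ⟨_, h⟩, hyx ⟨_, h⟩]

noncomputable instance : LinearOrder finSuppSeqs :=
  @linearOrderOfSTO _ (fun x y => AltLT x.1 y.1) _ (Classical.decRel _)

instance : Countable finSuppSeqs :=
  Function.Injective.countable (f := fun x : finSuppSeqs => Finsupp.ofSupportFinite x.1 x.2)
    fun _ _ h => Subtype.ext (congrArg (⇑) h)

instance : Nonempty finSuppSeqs := ⟨⟨0, by simp [finSuppSeqs]⟩⟩

instance : NoMaxOrder finSuppSeqs where
  exists_gt x := by
    obtain ⟨m, -, hm⟩ := exists_ge_apply_eq_natCast x.2 0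
    exact ⟨⟨_, update_mem_finSuppSeqs x.2 m (m + 1)⟩, _, altLTAt_update hm⟩

instance : NoMinOrder finSuppSeqs where
  exists_lt x := by
    obtain ⟨m, -, hm⟩ := exists_ge_apply_ne_natCast x.2 0
    exact ⟨⟨_, update_mem_finSuppSeqs x.2 m m⟩, _, update_altLTAt hm⟩

instance : DenselyOrdered finSuppSeqs where
  dense x y := fun ⟨n, hxy⟩ => by
    obtain ⟨m, hmn, hm⟩ := exists_ge_apply_eq_natCast x.2 (n + 1)
    refine ⟨⟨_, update_mem_finSuppSeqs x.2 m (m + 1)⟩, ⟨_, altLTAt_update hm⟩,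
      ⟨n, hxy.of_mem_cylinder ?_ (self_mem_cylinder _ _)⟩⟩
    exact cylinder_anti _ hmn (update_mem_cylinder _ _ _)

theorem exists_Ioo_subset_cylinder (x : finSuppSeqs) (n : ℕ) :
    ∃ a b, a < x ∧ x < b ∧ Ioo a b ⊆ Subtype.val ⁻¹' cylinder x.1 n := by
  obtain ⟨m, hmn, hm⟩ := exists_ge_apply_ne_natCast x.2 n
  obtain ⟨m', hmn', hm'⟩ := exists_ge_apply_eq_natCast x.2 n
  refine ⟨⟨_, update_mem_finSuppSeqs x.2 m m⟩, ⟨_, update_mem_finSuppSeqs x.2 m' (m' + 1)⟩,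
    ⟨_, update_altLTAt hm⟩, ⟨_, altLTAt_update hm'⟩, fun z ⟨haz, hzb⟩ => ?_⟩
  by_contra hz
  obtain ⟨k, hk, hzx | hxz⟩ := exists_lt_altLTAt_of_notMem_cylinder hz
  · refine haz.not_gt ⟨k, hzx.of_mem_cylinder (self_mem_cylinder _ _) ?_⟩
    exact cylinder_anti _ (by omega) (update_mem_cylinder _ _ _)
  · refine hzb.not_gt ⟨k, hxz.of_mem_cylinder ?_ (self_mem_cylinder _ _)⟩
    exact cylinder_anti _ (by omega) (update_mem_cylinder _ _ _)

theorem isOpen_setOf_lt : IsOpen {p : finSuppSeqs × finSuppSeqs | p.1 < p.2} := by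
  have hcyl (x : finSuppSeqs) (n : ℕ) : IsOpen ((↑) ⁻¹' cylinder x.1 n : Set finSuppSeqs) :=
    (isOpen_cylinder _ _ _).preimage continuous_subtype_val
  refine isOpen_iff_forall_mem_open.2 fun p ⟨n, hn⟩ =>
    ⟨_, fun q hq => ⟨n, hn.of_mem_cylinder hq.1 hq.2⟩, (hcyl p.1 (n + 1)).prod (hcyl p.2 (n + 1)),
      self_mem_cylinder _ _, self_mem_cylinder _ _⟩

instance : OrderTopology finSuppSeqs := by
  refine ⟨le_antisymm (le_generateFrom ?_) ?_⟩
  · rintro _ ⟨a, rfl | rfl⟩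
    exacts [isOpen_setOf_lt.preimage (.prodMk_right a), isOpen_setOf_lt.preimage (.prodMk_left a)]
  -- The order topology is finer: `Subtype.val` is continuous for it.
  · let := Preorder.topology finSuppSeqs
    have : OrderTopology finSuppSeqs := ⟨rfl⟩
    refine continuous_iff_le_induced.1 (continuous_pi fun k => continuous_iff_continuousAt.2
      fun x => ?_ : Continuous (Subtype.val : finSuppSeqs → ℕ → ZMod 2))
    rw [ContinuousAt, nhds_discrete (ZMod 2), tendsto_pure]
    obtain ⟨a, b, hax, hxb, hab⟩ := exists_Ioo_subset_cylinder x (k + 1)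
    filter_upwards [Ioo_mem_nhds hax hxb] with z hz
    exact hab hz k k.lt_succ_self

end AltLex

open AltLex in
/-- `G`, as a subspace of the Cantor cube, is homeomorphic to `ℚ^ℕ`. -/
theorem stmt_13 : Nonempty (↥Gset ≃ₜ (ℕ → ℚ)) := by
  obtain ⟨e⟩ := Order.iso_of_countable_dense finSuppSeqs ℚ
  exact ⟨(Homeomorph.subtypeColumns finSuppSeqs).trans
    (Homeomorph.piCongrRight fun _ => e.toHomeomorph)⟩
end

section
/- The space G = {x ∈ {0,1}^{ℕ×ℕ} : for every j ∈ ℕ, x_{i,j} = 0 for all but finitely many i ∈ ℕ}, with the subspace topology inherited from the product topology on {0,1}^{ℕ×ℕ} ({0,1} discrete), is not σ-compact: it is not a countable union of compact subsets. -/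
open Set Filter Topology

/-- `G` is not σ-compact: it is not a countable union of compact subsets. -/
theorem stmt_17 :
    ¬ ∃ K : ℕ → Set ↥Gset, (∀ n, IsCompact (K n)) ∧ ⋃ n, K n = Set.univ := by
  rintro ⟨K, hK, hcov⟩
  set φ : ℕ → ↥Gset → (ℕ → ZMod 2) := fun n x i => (x : (ℕ × ℕ) → ZMod 2) (i, n) with hφ
  have hφc : ∀ n, Continuous (φ n) := fun n =>
    continuous_pi fun i => (continuous_apply ((i, n) : ℕ × ℕ)).comp continuous_subtype_val
  have hCcl : ∀ n, IsClosed (φ n '' K n) := fun n => ((hK n).image (hφc n)).isClosed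
  have key : ∀ n, ∃ c : ℕ → ZMod 2, {i | c i ≠ 0}.Finite ∧ c ∉ φ n '' K n := by
    intro n
    by_contra h
    push_neg at h
    have hone : (fun _ : ℕ => (1 : ZMod 2)) ∈ φ n '' K n := by
      have htend : Tendsto (fun k : ℕ => fun i : ℕ => if i ≤ k then (1 : ZMod 2) else 0)
          atTop (𝓝 (fun _ => 1)) := by
        rw [tendsto_pi_nhds]
        intro i
        refine tendsto_const_nhds.congr' ?_
        filter_upwards [eventually_ge_atTop i] with k hk
        simp [hk]
      refine (hCcl n).mem_of_tendsto htend ?_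
      filter_upwards with k
      apply h
      apply Set.Finite.subset (Set.finite_Iic k)
      intro i hi
      simp only [mem_setOf_eq] at hi
      by_contra h'
      simp only [Set.mem_Iic] at h'
      simp [h'] at hi
    obtain ⟨x, hxK, hx⟩ := hone
    have hfin := x.2 n
    have : {i : ℕ | (x : (ℕ × ℕ) → ZMod 2) (i, n) ≠ 0} = Set.univ := by
      ext i
      simp only [mem_setOf_eq, Set.mem_univ, iff_true]
      have := congrFun hx i
      simp only [hφ] at this
      rw [this]
      exact one_ne_zero
    rw [this] at hfin
    exact Set.infinite_univ hfin
  choose c hcfin hc using key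
  have hy : (fun p : ℕ × ℕ => c p.2 p.1) ∈ Gset := fun j => hcfin j
  have hmem : (⟨_, hy⟩ : ↥Gset) ∈ ⋃ n, K n := hcov ▸ Set.mem_univ _
  obtain ⟨n, hn⟩ := Set.mem_iUnion.mp hmem
  exact hc n ⟨⟨_, hy⟩, hn, rfl⟩
end
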